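/- Suppose c(ξ, h) is of the form f(⟨ξ, h⟩) for a convex continuous f : ℝ → ℝ whose conjugate has effective domain contained in [−M, M] (M ≥ 0). Then for any ξ̂, h ∈ ℝ^q and ε ≥ 0, sup_{ξ ∈ ℝ^q} ( f(⟨ξ,h⟩) − λ‖ξ − ξ̂‖ ) + λε, minimized over λ ≥ M‖h‖_*, equals f(⟨ξ̂,h⟩) + ε·M·‖h‖_*. -/
import Mathlib


open scoped BigOperators

/-- The convex conjugate of `f : ℝ → ℝ`. -/
noncomputable def realConj (f : ℝ → ℝ) (θ : ℝ) : EReal :=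
  ⨆ x : ℝ, ((θ * x - f x : ℝ) : EReal)

/-- The dual norm `‖θ‖_* = sup_{‖y‖ ≤ 1} ⟨θ, y⟩` of a norm `N`. -/
noncomputable def dualNorm {n : ℕ} (N : (Fin n → ℝ) → ℝ) (θ : Fin n → ℝ) : ℝ :=
  sSup {r : ℝ | ∃ y : Fin n → ℝ, N y ≤ 1 ∧ r = ∑ i, θ i * y i}

section Aux

variable {q : ℕ} {N : (Fin q → ℝ) → ℝ}

lemma N_zero (hNeq : ∀ x, N x = 0 ↔ x = 0) : N 0 = 0 := (hNeq 0).mpr rfl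

/-- Norm-equivalence below: `m * ‖y‖ ≤ N y` for some `m > 0`. -/
lemma exists_lower_scale (hN0 : ∀ x, 0 ≤ N x) (hNeq : ∀ x, N x = 0 ↔ x = 0)
    (hNsmul : ∀ (c : ℝ) (x : Fin q → ℝ), N (c • x) = |c| * N x)
    (hNadd : ∀ x y, N (x + y) ≤ N x + N y) :
    ∃ m : ℝ, 0 < m ∧ ∀ y : Fin q → ℝ, m * ‖y‖ ≤ N y := by
  rcases Nat.eq_zero_or_pos q with hq | hq
  · refine ⟨1, one_pos, fun y => ?_⟩
    have hy : y = 0 := by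
      funext i; exact absurd i.2 (by omega)
    simp [hy, N_zero hNeq]
  -- N is Lipschitz hence continuous
  have hsub : ∀ x y : Fin q → ℝ, N x - N y ≤ N (x - y) := by
    intro x y
    have := hNadd (x - y) y
    simp only [sub_add_cancel] at this
    linarith
  set C : ℝ := ∑ i : Fin q, N (Pi.single i 1) with hC
  have hNle : ∀ y : Fin q → ℝ, N y ≤ C * ‖y‖ := by
    intro y
    have hdecomp : y = ∑ i : Fin q, Pi.single i (y i) := (Finset.univ_sum_single y).symm
    have h1 : N y ≤ ∑ i : Fin q, N (Pi.single i (y i)) := by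
      have := Finset.le_sum_of_subadditive N (by simp [N_zero hNeq]) hNadd
        Finset.univ (fun i : Fin q => Pi.single i (y i))
      rwa [Finset.univ_sum_single] at this
    have h2 : ∀ i : Fin q, N (Pi.single i (y i)) ≤ N (Pi.single i 1) * ‖y‖ := by
      intro i
      have : Pi.single i (y i) = (y i) • (Pi.single i (1:ℝ) : Fin q → ℝ) := by
        funext j
        by_cases hj : j = i <;> simp [hj, Pi.single_apply]
      rw [this, hNsmul]
      have h3 : |y i| ≤ ‖y‖ := by
        have := norm_le_pi_norm y i
        simpa using this
      have := mul_le_mul_of_nonneg_left h3 (hN0 (Pi.single i 1))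
      linarith [this]
    calc N y ≤ ∑ i : Fin q, N (Pi.single i (y i)) := h1
      _ ≤ ∑ i : Fin q, N (Pi.single i 1) * ‖y‖ := Finset.sum_le_sum fun i _ => h2 i
      _ = C * ‖y‖ := by rw [hC, Finset.sum_mul]
  have hcontN : Continuous N := by
    have hC0 : 0 ≤ C := Finset.sum_nonneg fun i _ => hN0 _
    refine (LipschitzWith.of_dist_le_mul (K := C.toNNReal) (f := N) ?_).continuous
    intro x y
    rw [Real.coe_toNNReal _ hC0, Real.dist_eq, dist_eq_norm]
    rw [abs_sub_le_iff]
    have hNneg : N (y - x) = N (x - y) := by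
      have : y - x = (-1 : ℝ) • (x - y) := by simp [neg_sub]
      rw [this, hNsmul]; simp
    constructor
    · exact le_trans (hsub x y) (hNle _)
    · refine le_trans (hsub y x) ?_
      rw [hNneg]; exact hNle _
  -- min on the sphere
  haveI : Nonempty (Fin q) := ⟨⟨0, hq⟩⟩
  have hsph : (Metric.sphere (0 : Fin q → ℝ) 1).Nonempty := by
    rw [NormedSpace.sphere_nonempty]; norm_num
  obtain ⟨y₀, hy₀mem, hy₀min⟩ :=
    (isCompact_sphere (0 : Fin q → ℝ) 1).exists_isMinOn hsph hcontN.continuousOn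
  have hy₀norm : ‖y₀‖ = 1 := by
    simpa [mem_sphere_zero_iff_norm] using hy₀mem
  have hy₀ne : y₀ ≠ 0 := by
    intro h; rw [h] at hy₀norm; simp at hy₀norm
  have hm : 0 < N y₀ :=
    lt_of_le_of_ne (hN0 y₀) fun h => hy₀ne ((hNeq y₀).mp h.symm)
  refine ⟨N y₀, hm, fun y => ?_⟩
  rcases eq_or_ne y 0 with rfl | hy
  · simp [N_zero hNeq]
  · have hyn : (0:ℝ) < ‖y‖ := norm_pos_iff.mpr hy
    set u : Fin q → ℝ := ‖y‖⁻¹ • y with hu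
    have humem : u ∈ Metric.sphere (0 : Fin q → ℝ) 1 := by
      rw [mem_sphere_zero_iff_norm, hu, norm_smul]
      simp [abs_of_pos (inv_pos.mpr hyn), inv_mul_cancel₀ hyn.ne']
    have hNy : N y = ‖y‖ * N u := by
      have hyu : y = ‖y‖ • u := by
        rw [hu, smul_smul, mul_inv_cancel₀ hyn.ne', one_smul]
      conv_lhs => rw [hyu]
      rw [hNsmul, abs_of_pos hyn]
    rw [hNy, mul_comm (N y₀)]
    exact mul_le_mul_of_nonneg_left (hy₀min humem) hyn.le

lemma dualSet_bddAbove (hN0 : ∀ x, 0 ≤ N x) (hNeq : ∀ x, N x = 0 ↔ x = 0)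
    (hNsmul : ∀ (c : ℝ) (x : Fin q → ℝ), N (c • x) = |c| * N x)
    (hNadd : ∀ x y, N (x + y) ≤ N x + N y) (h : Fin q → ℝ) :
    BddAbove {r : ℝ | ∃ y : Fin q → ℝ, N y ≤ 1 ∧ r = ∑ i, h i * y i} := by
  obtain ⟨m, hm, hmle⟩ := exists_lower_scale hN0 hNeq hNsmul hNadd
  refine ⟨(∑ i, |h i|) * m⁻¹, fun r hr => ?_⟩
  obtain ⟨y, hy1, rfl⟩ := hr
  have hyn : ‖y‖ ≤ m⁻¹ := by
    have h1 : m * ‖y‖ ≤ 1 := le_trans (hmle y) hy1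
    have h2 : m * m⁻¹ = 1 := mul_inv_cancel₀ hm.ne'
    nlinarith [norm_nonneg y, inv_pos.mpr hm]
  calc ∑ i, h i * y i ≤ ∑ i, |h i| * ‖y‖ := by
        refine Finset.sum_le_sum fun i _ => ?_
        calc h i * y i ≤ |h i * y i| := le_abs_self _
          _ = |h i| * |y i| := abs_mul _ _
          _ ≤ |h i| * ‖y‖ := by
              have h3 : |y i| ≤ ‖y‖ := by simpa using norm_le_pi_norm y i
              exact mul_le_mul_of_nonneg_left h3 (abs_nonneg _)
    _ = (∑ i, |h i|) * ‖y‖ := (Finset.sum_mul _ _ _).symm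
    _ ≤ (∑ i, |h i|) * m⁻¹ := by
        refine mul_le_mul_of_nonneg_left hyn ?_
        exact Finset.sum_nonneg fun i _ => abs_nonneg _

lemma dualNorm_nonneg (hN0 : ∀ x, 0 ≤ N x) (hNeq : ∀ x, N x = 0 ↔ x = 0)
    (hNsmul : ∀ (c : ℝ) (x : Fin q → ℝ), N (c • x) = |c| * N x)
    (hNadd : ∀ x y, N (x + y) ≤ N x + N y) (h : Fin q → ℝ) :
    0 ≤ dualNorm N h := by
  refine le_csSup (dualSet_bddAbove hN0 hNeq hNsmul hNadd h) ?_
  exact ⟨0, by simp [N_zero hNeq]⟩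

/-- Generalized Cauchy–Schwarz for the dual norm. -/
lemma pairing_le (hN0 : ∀ x, 0 ≤ N x) (hNeq : ∀ x, N x = 0 ↔ x = 0)
    (hNsmul : ∀ (c : ℝ) (x : Fin q → ℝ), N (c • x) = |c| * N x)
    (hNadd : ∀ x y, N (x + y) ≤ N x + N y) (h v : Fin q → ℝ) :
    ∑ i, h i * v i ≤ dualNorm N h * N v := by
  rcases eq_or_ne v 0 with rfl | hv
  · simp [N_zero hNeq]
  · have hNv : 0 < N v := lt_of_le_of_ne (hN0 v) fun h' => hv ((hNeq v).mp h'.symm)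
    set u : Fin q → ℝ := (N v)⁻¹ • v with hu
    have hNu : N u ≤ 1 := by
      rw [hu, hNsmul, abs_of_pos (inv_pos.mpr hNv), inv_mul_cancel₀ hNv.ne']
    have hmem : (∑ i, h i * u i) ∈
        {r : ℝ | ∃ y : Fin q → ℝ, N y ≤ 1 ∧ r = ∑ i, h i * y i} := ⟨u, hNu, rfl⟩
    have hle : (∑ i, h i * u i) ≤ dualNorm N h :=
      le_csSup (dualSet_bddAbove hN0 hNeq hNsmul hNadd h) hmem
    have heq : (∑ i, h i * u i) = (N v)⁻¹ * ∑ i, h i * v i := by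
      rw [Finset.mul_sum]
      refine Finset.sum_congr rfl fun i _ => ?_
      simp [hu, Pi.smul_apply, smul_eq_mul]; ring
    rw [heq] at hle
    calc ∑ i, h i * v i = ((N v)⁻¹ * ∑ i, h i * v i) * N v := by
          field_simp
      _ ≤ dualNorm N h * N v := mul_le_mul_of_nonneg_right hle hNv.le

/-- The conjugate of a convex continuous function is finite at any secant slope. -/
lemma conj_lt_top_of_slope {f : ℝ → ℝ} (hconv : ConvexOn ℝ Set.univ f)
    (hcont : Continuous f) {b a : ℝ} (hba : b < a) :
    realConj f ((f a - f b) / (a - b)) < ⊤ := by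
  set s : ℝ := (f a - f b) / (a - b) with hs
  have hab : (0:ℝ) < a - b := by linarith
  set g : ℝ → ℝ := fun x => s * x - f x with hg
  have hgcont : Continuous g := (continuous_const.mul continuous_id).sub hcont
  have hbdd : BddAbove (g '' Set.Icc b a) :=
    (isCompact_Icc.image hgcont).bddAbove
  set B : ℝ := sSup (g '' Set.Icc b a) with hB
  have hgb : g b ≤ B := le_csSup hbdd ⟨b, Set.left_mem_Icc.mpr hba.le, rfl⟩
  have hga : g a ≤ B := le_csSup hbdd ⟨a, Set.right_mem_Icc.mpr hba.le, rfl⟩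
  have key : ∀ x : ℝ, g x ≤ B := by
    intro x
    rcases lt_trichotomy x b with hx | hx | hx
    · -- slope (x,b) ≤ slope (b,a) = s
      have hsl := hconv.slope_mono_adjacent (Set.mem_univ x) (Set.mem_univ a) hx hba
      -- (f b - f x)/(b - x) ≤ s
      have hbx : (0:ℝ) < b - x := by linarith
      have h1 : f b - f x ≤ s * (b - x) := by
        have h0 := (div_le_div_iff₀ hbx hab).mp hsl
        have h2 : (f b - f x) * (a - b) ≤ (s * (b - x)) * (a - b) := by
          calc (f b - f x) * (a - b) ≤ (f a - f b) * (b - x) := h0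
            _ = (s * (b - x)) * (a - b) := by rw [hs]; field_simp
        exact le_of_mul_le_mul_right h2 hab
      have : g x ≤ g b := by
        simp only [hg]
        nlinarith [h1]
      exact this.trans hgb
    · subst hx; exact hgb
    · rcases lt_trichotomy x a with hx2 | hx2 | hx2
      · exact le_csSup hbdd ⟨x, ⟨hx.le, hx2.le⟩, rfl⟩
      · subst hx2; exact hga
      · have hsl := hconv.slope_mono_adjacent (Set.mem_univ b) (Set.mem_univ x) hba hx2
        have hax : (0:ℝ) < x - a := by linarith
        have h1 : s * (x - a) ≤ f x - f a := by
          have h0 := (div_le_div_iff₀ hab hax).mp hsl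
          have h2 : (s * (x - a)) * (a - b) ≤ (f x - f a) * (a - b) := by
            calc (s * (x - a)) * (a - b) = (f a - f b) * (x - a) := by
                  rw [hs]; field_simp
              _ ≤ (f x - f a) * (a - b) := h0
          exact le_of_mul_le_mul_right h2 hab
        have : g x ≤ g a := by
          simp only [hg]
          nlinarith [h1]
        exact this.trans hga
  have : realConj f s ≤ (B : EReal) := by
    rw [realConj]
    refine iSup_le fun x => ?_
    exact_mod_cast key x
  exact lt_of_le_of_lt this (EReal.coe_lt_top B)

/-- `f` is `M`-Lipschitz. -/
lemma lipschitz_of_dom {f : ℝ → ℝ} (hconv : ConvexOn ℝ Set.univ f)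
    (hcont : Continuous f) {M : ℝ}
    (hdom : ∀ θ : ℝ, realConj f θ < ⊤ → |θ| ≤ M) (a b : ℝ) :
    f a - f b ≤ M * |a - b| := by
  rcases lt_trichotomy a b with hab | hab | hab
  · have hsl := hdom _ (conj_lt_top_of_slope hconv hcont hab)
    have hba : (0:ℝ) < b - a := by linarith
    have h1 : f b - f a = (f b - f a) / (b - a) * (b - a) := by field_simp
    obtain ⟨hl, hr⟩ := abs_le.mp hsl
    rw [abs_sub_comm, abs_of_pos hba]
    nlinarith
  · subst hab; simp
  · have hsl := hdom _ (conj_lt_top_of_slope hconv hcont hab)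
    have hba : (0:ℝ) < a - b := by linarith
    have h1 : f a - f b = (f a - f b) / (a - b) * (a - b) := by field_simp
    obtain ⟨hl, hr⟩ := abs_le.mp hsl
    rw [abs_of_pos hba]
    nlinarith

end Aux

/-- One-block regularized reformulation: for convex continuous `f : ℝ → ℝ` whose
conjugate has effective domain contained in `[−M, M]` (`M ≥ 0`), `ξ̂, h ∈ ℝ^q`, `ε ≥ 0`:
the inf over `λ ≥ M‖h‖_*` of `sup_ξ ( f(⟨ξ,h⟩) − λ‖ξ − ξ̂‖ ) + λε` equals
`f(⟨ξ̂,h⟩) + ε·M·‖h‖_*`. -/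
theorem one_block_regularized_reformulation (q : ℕ) (N : (Fin q → ℝ) → ℝ)
    (hN0 : ∀ x, 0 ≤ N x) (hNeq : ∀ x, N x = 0 ↔ x = 0)
    (hNsmul : ∀ (c : ℝ) (x : Fin q → ℝ), N (c • x) = |c| * N x)
    (hNadd : ∀ x y, N (x + y) ≤ N x + N y)
    (f : ℝ → ℝ) (hconv : ConvexOn ℝ Set.univ f) (hcont : Continuous f)
    (M : ℝ) (hM : 0 ≤ M) (hdom : ∀ θ : ℝ, realConj f θ < ⊤ → |θ| ≤ M)
    (ξhat h : Fin q → ℝ) (ε : ℝ) (hε : 0 ≤ ε) :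
    (⨅ lam : {l : ℝ // M * dualNorm N h ≤ l},
        ((⨆ ξ : Fin q → ℝ, ((f (∑ i, ξ i * h i) - lam.1 * N (ξ - ξhat) : ℝ) : EReal))
          + ((lam.1 * ε : ℝ) : EReal)))
      = ((f (∑ i, ξhat i * h i) + ε * M * dualNorm N h : ℝ) : EReal) := by
  have hNzero : N 0 = 0 := N_zero hNeq
  have key : ∀ ξ : Fin q → ℝ,
      f (∑ i, ξ i * h i) - f (∑ i, ξhat i * h i)
        ≤ (M * dualNorm N h) * N (ξ - ξhat) := by
    intro ξ
    set v : Fin q → ℝ := ξ - ξhat with hv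
    have hdiff : (∑ i, ξ i * h i) - (∑ i, ξhat i * h i) = ∑ i, h i * v i := by
      rw [← Finset.sum_sub_distrib]
      refine Finset.sum_congr rfl fun i _ => ?_
      simp only [hv, Pi.sub_apply]; ring
    have hp1 := pairing_le hN0 hNeq hNsmul hNadd h v
    have hp2 := pairing_le hN0 hNeq hNsmul hNadd h (-v)
    have hNneg : N (-v) = N v := by
      have hneg : (-v) = (-1 : ℝ) • v := by simp
      rw [hneg, hNsmul]; simp
    have hsumneg : ∑ i, h i * (-v) i = -∑ i, h i * v i := by
      simp [mul_neg]
    rw [hNneg, hsumneg] at hp2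
    have habs : |(∑ i, ξ i * h i) - (∑ i, ξhat i * h i)| ≤ dualNorm N h * N v := by
      rw [hdiff, abs_le]
      exact ⟨by linarith, hp1⟩
    calc f (∑ i, ξ i * h i) - f (∑ i, ξhat i * h i)
        ≤ M * |(∑ i, ξ i * h i) - (∑ i, ξhat i * h i)| :=
          lipschitz_of_dom hconv hcont hdom _ _
      _ ≤ M * (dualNorm N h * N v) := mul_le_mul_of_nonneg_left habs hM
      _ = (M * dualNorm N h) * N v := by ring
  -- the sup at λ = M * dualNorm N h collapses to f(⟨ξ̂,h⟩)
  have hsupL : (⨆ ξ : Fin q → ℝ,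
      ((f (∑ i, ξ i * h i) - (M * dualNorm N h) * N (ξ - ξhat) : ℝ) : EReal))
      = ((f (∑ i, ξhat i * h i) : ℝ) : EReal) := by
    apply le_antisymm
    · refine iSup_le fun ξ => ?_
      have := key ξ
      exact_mod_cast (by linarith :
        f (∑ i, ξ i * h i) - (M * dualNorm N h) * N (ξ - ξhat)
          ≤ f (∑ i, ξhat i * h i))
    · have hle := le_iSup (fun ξ : Fin q → ℝ =>
        ((f (∑ i, ξ i * h i) - (M * dualNorm N h) * N (ξ - ξhat) : ℝ) : EReal)) ξhat
      simpa [hNzero] using hle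
  apply le_antisymm
  · refine le_trans (iInf_le _ ⟨M * dualNorm N h, le_refl _⟩) ?_
    rw [hsupL, ← EReal.coe_add, EReal.coe_le_coe_iff]
    ring_nf
    exact le_refl _
  · refine le_iInf fun lam => ?_
    obtain ⟨l, hl⟩ := lam
    have h1 : ((f (∑ i, ξhat i * h i) : ℝ) : EReal)
        ≤ ⨆ ξ : Fin q → ℝ, ((f (∑ i, ξ i * h i) - l * N (ξ - ξhat) : ℝ) : EReal) := by
      have hle := le_iSup (fun ξ : Fin q → ℝ =>
        ((f (∑ i, ξ i * h i) - l * N (ξ - ξhat) : ℝ) : EReal)) ξhat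
      simpa [hNzero] using hle
    have h2 : ε * M * dualNorm N h ≤ l * ε := by
      have := mul_le_mul_of_nonneg_right hl hε
      nlinarith
    calc ((f (∑ i, ξhat i * h i) + ε * M * dualNorm N h : ℝ) : EReal)
        = ((f (∑ i, ξhat i * h i) : ℝ) : EReal) + ((ε * M * dualNorm N h : ℝ) : EReal) := by
          rw [← EReal.coe_add]
      _ ≤ (⨆ ξ : Fin q → ℝ, ((f (∑ i, ξ i * h i) - l * N (ξ - ξhat) : ℝ) : EReal))
            + ((l * ε : ℝ) : EReal) := by
          exact add_le_add h1 (by exact_mod_cast h2)
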